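/- If B is a basis of a continuous complete lattice L containing the quantale unit k, then the closure of B under finite joins and the quantale multiplication ⊗ is again a basis of L. -/
import Mathlib


/-- Way-below relation in a complete lattice. -/
def WayBelow {L : Type*} [CompleteLattice L] (y x : L) : Prop :=
  ∀ S : Set L, x ≤ sSup S → ∃ A ⊆ S, A.Finite ∧ y ≤ sSup A

/-- A basis of a complete lattice: for every `x`, the set of basis elements
way-below `x` is directed and has `x` as least upper bound. -/
def IsBasis {L : Type*} [CompleteLattice L] (B : Set L) : Prop :=
  ∀ x : L,
    (∀ a ∈ B ∩ {y | WayBelow y x}, ∀ b ∈ B ∩ {y | WayBelow y x},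
      ∃ c ∈ B ∩ {y | WayBelow y x}, a ≤ c ∧ b ≤ c) ∧
    sSup (B ∩ {y | WayBelow y x}) = x

/-- Closure of a subset under finite joins and the quantale multiplication. -/
inductive QClosure {L : Type*} [CompleteLattice L] [CommMonoid L] (B : Set L) : L → Prop
  | base {b : L} : b ∈ B → QClosure B b
  | bot : QClosure B ⊥
  | join {x y : L} : QClosure B x → QClosure B y → QClosure B (x ⊔ y)
  | mul {x y : L} : QClosure B x → QClosure B y → QClosure B (x * y)

/-- If `B` is a basis of a continuous complete lattice underlying a commutative
unital quantale and `B` contains the unit, then the closure of `B` under finite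
joins and the multiplication is again a basis. -/
theorem stmt2 {L : Type*} [CompleteLattice L] [CommMonoid L]
    (hdist : ∀ (x : L) (S : Set L), x * sSup S = ⨆ s ∈ S, x * s)
    (hcont : ∀ x : L, sSup {y | WayBelow y x} = x)
    (B : Set L) (hB : IsBasis B) (hk : (1 : L) ∈ B) :
    IsBasis {x | QClosure B x} := by
  intro x
  constructor
  · rintro a ⟨ha, hax⟩ b ⟨hb, hbx⟩
    refine ⟨a ⊔ b, ⟨QClosure.join ha hb, ?_⟩, le_sup_left, le_sup_right⟩
    intro S hS
    obtain ⟨A1, hA1S, hA1f, hA1⟩ := hax S hS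
    obtain ⟨A2, hA2S, hA2f, hA2⟩ := hbx S hS
    refine ⟨A1 ∪ A2, Set.union_subset hA1S hA2S, hA1f.union hA2f, ?_⟩
    rw [sSup_union]
    exact sup_le_sup hA1 hA2
  · apply le_antisymm
    · apply sSup_le
      rintro y ⟨-, hy⟩
      obtain ⟨A, hAS, -, hA⟩ := hy {x} sSup_singleton.ge
      calc y ≤ sSup A := hA
        _ ≤ sSup {x} := sSup_le_sSup hAS
        _ = x := sSup_singleton
    · conv_lhs => rw [← (hB x).2]
      exact sSup_le_sSup fun y ⟨hy, hyx⟩ => ⟨QClosure.base hy, hyx⟩
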